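/- The matrices C = 1+e_{d−1,2}+e_{d,1} and D = (−1)^d(e_{1,2}−e_{2,3}+∑_{i=3}^{d} e_{i,i+1}) (cyclic index convention) generate SL(d,p) for every prime p and every d ≥ 5. -/

import Mathlib

open Matrix
open Fin.NatCast

/-- The matrix `C = 1 + e_{d-1,2} + e_{d,1}` (paper indices `1,…,d` become `0,…,d-1`). -/
def AlbertThompsonC (p d : ℕ) [NeZero d] : Matrix (Fin d) (Fin d) (ZMod p) :=
  1 + single ((d - 2 : ℕ) : Fin d) ((1 : ℕ) : Fin d) 1 +
    single ((d - 1 : ℕ) : Fin d) ((0 : ℕ) : Fin d) 1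

/-- The matrix `D = (-1)^d (e_{1,2} - e_{2,3} + ∑_{i=3}^{d} e_{i,i+1})` with the cyclic
index convention `e_{i,d+j} = e_{i,j}` (realized by addition in `Fin d`). -/
def AlbertThompsonD (p d : ℕ) [NeZero d] : Matrix (Fin d) (Fin d) (ZMod p) :=
  ((-1 : ZMod p) ^ d) •
    (single ((0 : ℕ) : Fin d) ((1 : ℕ) : Fin d) 1 -
      single ((1 : ℕ) : Fin d) ((2 : ℕ) : Fin d) 1 +
      ∑ k ∈ Finset.Icc 2 (d - 1), single ((k : ℕ) : Fin d) (((k : ℕ) : Fin d) + 1) 1)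

/-!
Conjugation by `D` permutes the matrix units cyclically up to sign, `D⁻¹ e_{i,j} D = ±e_{i+1,j+1}`,
so once `⟨C, D⟩` contains all transvections at one position it contains all those with the same
offset `j - i` modulo `d`. In the paper's indices, `⁅C, D⁻¹ C D⁆ = 1 + e_{d,2}` gives offset 2
(its powers give every coefficient, as `F_p` is additively generated by `1`), and then
`⁅1 + c e_{d-2,d}, C⁆ = 1 + c e_{d-2,1}` gives offset 3. Since
`⁅1 + a e_{i,j}, 1 + e_{j,k}⁆ = 1 + a e_{i,k}`, offsets add, and 2 and 3 generate every nonzero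
offset. Hence `⟨C, D⟩` contains every elementary transvection, and these generate `SL(d, p)`.
-/

open scoped commutatorElement

theorem Subgroup.commutatorElement_mem {G : Type*} [Group G] {H : Subgroup G} {g h : G}
    (hg : g ∈ H) (hh : h ∈ H) : ⁅g, h⁆ ∈ H := by
  rw [commutatorElement_def]
  exact mul_mem (mul_mem (mul_mem hg hh) (inv_mem hg)) (inv_mem hh)

namespace Matrix.SpecialLinearGroup

section CommRing

variable {ι R : Type*} [Fintype ι] [DecidableEq ι] [CommRing R]

lemma coe_inv_of_mul_self_eq_zero {g : SpecialLinearGroup ι R} {N : Matrix ι ι R}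
    (hg : (g : Matrix ι ι R) = 1 + N) (hN : N * N = 0) :
    ((g⁻¹ : SpecialLinearGroup ι R) : Matrix ι ι R) = 1 - N :=
  left_inv_eq_right_inv (by rw [← coe_mul, inv_mul_cancel, coe_one])
    (by rw [hg, add_mul, one_mul, mul_sub, mul_one, hN, sub_zero, sub_add_cancel])

lemma coe_commutatorElement_of_mul_eq_zero {g h : SpecialLinearGroup ι R}
    {N M : Matrix ι ι R} (hg : (g : Matrix ι ι R) = 1 + N) (hh : (h : Matrix ι ι R) = 1 + M)
    (hN : N * N = 0) (hM : M * M = 0) (hMN : M * N = 0) :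
    ((⁅g, h⁆ : SpecialLinearGroup ι R) : Matrix ι ι R) = 1 + N * M := by
  rw [commutatorElement_def, coe_mul, coe_mul, coe_mul, coe_inv_of_mul_self_eq_zero hg hN,
    coe_inv_of_mul_self_eq_zero hh hM, hg, hh]
  have h₁ : (1 + N) * (1 + M) * (1 - N) = 1 + M + N * M := by
    simp only [add_mul, mul_add, mul_sub, one_mul, mul_one, mul_assoc, hN, hMN, mul_zero]
    abel
  rw [h₁]
  simp only [add_mul, mul_sub, one_mul, mul_one, mul_assoc, hM, mul_zero]
  abel

lemma coe_inv_mul_mul_eq {g x : SpecialLinearGroup ι R} {Y : Matrix ι ι R}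
    (h : (g : Matrix ι ι R) * x = x * Y) :
    ((x⁻¹ * g * x : SpecialLinearGroup ι R) : Matrix ι ι R) = Y := by
  rw [coe_mul, coe_mul, mul_assoc, h, ← mul_assoc, ← coe_mul, inv_mul_cancel, coe_one, one_mul]

lemma commutatorElement_transvection_transvection {i j k : ι} (hij : i ≠ j) (hjk : j ≠ k)
    (hik : i ≠ k) (a b : R) :
    ⁅transvection hij a, transvection hjk b⁆ = transvection hik (a * b) :=
  Subtype.ext <| (coe_commutatorElement_of_mul_eq_zero (transvection_coe hij a)
    (transvection_coe hjk b) (single_mul_single_of_ne _ _ _ _ hij.symm _)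
    (single_mul_single_of_ne _ _ _ _ hjk.symm _)
    (single_mul_single_of_ne _ _ _ _ hik.symm _)).trans
    (by rw [single_mul_single_same]; rfl)

lemma transvection_zsmul {i j : ι} (hij : i ≠ j) (n : ℤ) (b : R) :
    transvection hij (n • b) = transvection hij b ^ n :=
  map_zpow (⟨⟨fun c => transvection hij c.toAdd, transvection_coeff_zero hij⟩,
    fun x y => transvection_add hij x.toAdd y.toAdd⟩ : Multiplicative R →* _) (.ofAdd b) n

def TransvectionsMem (H : Subgroup (SpecialLinearGroup ι R)) (i j : ι) : Prop :=
  ∀ (hij : i ≠ j) (c : R), transvection hij c ∈ H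

lemma TransvectionsMem.trans {H : Subgroup (SpecialLinearGroup ι R)} {i j k : ι}
    (hij : i ≠ j) (hjk : j ≠ k) (h₁ : TransvectionsMem H i j) (h₂ : TransvectionsMem H j k) :
    TransvectionsMem H i k := fun hik c => by
  have := Subgroup.commutatorElement_mem (h₁ hij c) (h₂ hjk 1)
  rwa [commutatorElement_transvection_transvection hij hjk hik, mul_one] at this

end CommRing

lemma transvectionsMem_of_one_mem {ι : Type*} [Fintype ι] [DecidableEq ι] {n : ℕ}
    {H : Subgroup (SpecialLinearGroup ι (ZMod n))} {i j : ι} (hij : i ≠ j)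
    (h : transvection hij 1 ∈ H) : TransvectionsMem H i j := fun _ c => by
  rw [← ZMod.intCast_zmod_cast c, ← zsmul_one, transvection_zsmul]
  exact zpow_mem h _

section Field

variable {ι F : Type*} [Fintype ι] [DecidableEq ι] [Field F]

lemma diag2n_eq_transvection_mul {i j : ι} (hij : i ≠ j) (a : F) (ha : a ≠ 0) :
    diag2n hij a ha = transvection hij a * transvection hij.symm (-a⁻¹) * transvection hij a *
      transvection hij (-1) * transvection hij.symm 1 * transvection hij (-1) := by
  have hcoe : ∀ {k l : ι} (h : k ≠ l) (c : F),
      ((transvection h c : SpecialLinearGroup ι F) : Matrix ι ι F) = Matrix.transvection k l c :=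
    fun _ _ => rfl
  refine Subtype.ext (Matrix.ext fun k l => ?_)
  simp only [coe_mul, diag2n_coe, hcoe]
  by_cases hli : l = i
  · simp only [hli, mul_transvection_apply_same, mul_transvection_apply_of_ne _ _ _ _ hij,
      mul_transvection_apply_of_ne _ _ _ _ hij.symm]
    simp only [diagonal_apply, Matrix.transvection, add_apply, one_apply, single_apply, and_true,
      neg_mul, one_mul, neg_add_rev, neg_neg]
    grind
  by_cases hlj : l = j
  · simp only [hlj, mul_transvection_apply_same, mul_transvection_apply_of_ne _ _ _ _ hij,
      mul_transvection_apply_of_ne _ _ _ _ hij.symm]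
    simp only [diagonal_apply, Matrix.transvection, add_apply, one_apply, single_apply, and_true,
      neg_mul, one_mul, neg_add_rev, neg_neg]
    grind
  · simp only [mul_transvection_apply_of_ne _ _ _ _ hli, mul_transvection_apply_of_ne _ _ _ _ hlj]
    simp only [diagonal_apply, Matrix.transvection, add_apply, one_apply, single_apply]
    grind

theorem eq_top_of_forall_transvectionsMem [Nontrivial ι] {H : Subgroup (SpecialLinearGroup ι F)}
    (h : ∀ i j, TransvectionsMem H i j) : H = ⊤ := by
  refine (Subgroup.eq_top_iff' H).2 fun M => diagonal_transvection_induction' (· ∈ H) M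
    (fun i j hij c hc => ?_) (fun i j hij c => h i j hij c) (fun _ _ => mul_mem)
  rw [diag2n_eq_transvection_mul]
  repeat' apply mul_mem
  all_goals exact h _ _ _ _

end Field

end Matrix.SpecialLinearGroup

theorem Fin.forall_ne_zero_of_two_of_three {d : ℕ} [NeZero d] (hd : 3 ≤ d) {P : Fin d → Prop}
    (h₂ : P 2) (h₃ : P 3) (hadd : ∀ r s, r ≠ 0 → s ≠ 0 → P r → P s → P (r + s)) :
    ∀ r, r ≠ 0 → P r := by
  have hne : ∀ n : ℕ, 0 < n → n < d → (n : Fin d) ≠ 0 := fun n hn hnd => by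
    rw [Ne, Fin.natCast_eq_zero]
    exact fun h => absurd (Nat.le_of_dvd hn h) (by omega)
  have htwo : (2 : Fin d) ≠ 0 := by simpa using hne 2 two_pos (by omega)
  have hadd_two : ∀ m : ℕ, ((m + 2 : ℕ) : Fin d) = (m : Fin d) + 2 := fun m => by
    rw [Nat.cast_add, Nat.cast_ofNat]
  have hnat : ∀ n : ℕ, 2 ≤ n → n < d → P n := by
    intro n
    induction n using Nat.strong_induction_on with
    | _ n ih =>
      intro h2n hnd
      rcases (show n = 2 ∨ n = 3 ∨ 4 ≤ n by omega) with rfl | rfl | h4n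
      · simpa using h₂
      · simpa using h₃
      · have := hadd _ _ (hne (n - 2) (by omega) (by omega)) htwo
          (ih (n - 2) (by omega) (by omega) (by omega)) h₂
        rwa [← hadd_two, Nat.sub_add_cancel (by omega)] at this
  intro r hr
  have hr0 : r.val ≠ 0 := fun h => hr (Fin.ext h)
  rw [← Fin.cast_val_eq_self r]
  rcases (show r.val = 1 ∨ 2 ≤ r.val by omega) with h1 | h2
  · have := hadd _ _ (hne (d - 1) (by omega) (by omega)) htwo (hnat (d - 1) (by omega) (by omega))
      h₂
    rwa [← hadd_two, show d - 1 + 2 = d + 1 by omega, Nat.cast_add, Fin.natCast_self, zero_add,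
      ← h1] at this
  · exact hnat r.val h2 r.isLt

section AlbertThompson

open SpecialLinearGroup

variable {p d : ℕ} [NeZero d] {H : Subgroup (SpecialLinearGroup (Fin d) (ZMod p))}
  {C D : SpecialLinearGroup (Fin d) (ZMod p)}

-- The `-e_{2,3}` term of `D`: index `1` here is the paper's `2`.
def albertThompsonSign (p : ℕ) (i : Fin d) : ZMod p := if i = 1 then -1 else 1

lemma albertThompsonSign_mul_self (i : Fin d) :
    albertThompsonSign p i * albertThompsonSign p i = 1 := by
  unfold albertThompsonSign; split_ifs <;> simp

lemma prod_albertThompsonSign : ∏ i : Fin d, albertThompsonSign p i = -1 := by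
  simp [albertThompsonSign, Finset.prod_ite_eq']

lemma sum_Icc_single_apply (i j : Fin d) :
    (∑ k ∈ Finset.Icc 2 (d - 1), single (k : Fin d) ((k : Fin d) + 1) (1 : ZMod p)) i j =
      if 2 ≤ i.val ∧ j = i + 1 then 1 else 0 := by
  have hterm : ∀ k ∈ Finset.Icc 2 (d - 1),
      single (k : Fin d) ((k : Fin d) + 1) (1 : ZMod p) i j =
        if k = i.val then (if j = i + 1 then 1 else 0) else 0 := fun k hk => by
    rw [Finset.mem_Icc] at hk
    have hki : (k : Fin d) = i ↔ k = i.val := by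
      rw [Fin.ext_iff, Fin.val_cast_of_lt (by omega)]
    by_cases hk : k = i.val <;> simp [single_apply, hki, hk, eq_comm]
  rw [Matrix.sum_apply, Finset.sum_congr rfl hterm, Finset.sum_ite_eq']
  simp only [Finset.mem_Icc, ite_and]
  grind

lemma AlbertThompsonD_apply (hd : 2 ≤ d) (i j : Fin d) :
    AlbertThompsonD p d i j = if j = i + 1 then (-1) ^ d * albertThompsonSign p i else 0 := by
  have hd1 : d ≠ 1 := by omega
  have h1 : (1 : Fin d).val = 1 := by rw [Fin.val_one', Nat.mod_eq_of_lt (by omega)]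
  simp only [AlbertThompsonD, Matrix.smul_apply, Matrix.add_apply, Matrix.sub_apply,
    sum_Icc_single_apply, single_apply, Nat.cast_zero, Nat.cast_one,
    Nat.cast_ofNat, albertThompsonSign, smul_eq_mul]
  by_cases hi0 : i = 0
  · subst hi0
    simp [hd1, eq_comm]
  by_cases hi1 : i = 1
  · subst hi1
    by_cases hj : j = 2 <;>
      simp [hj, hd1, Nat.mod_eq_of_lt (show 1 < d by omega), one_add_one_eq_two, eq_comm]
  have h2 : 2 ≤ i.val := by
    have : i.val ≠ 0 := fun h => hi0 (Fin.ext h)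
    have : i.val ≠ 1 := fun h => hi1 (Fin.ext (h.trans h1.symm))
    omega
  simp [Ne.symm hi0, Ne.symm hi1, h2, hi1]

lemma det_AlbertThompsonD (hd : 2 ≤ d) : (AlbertThompsonD p d).det = 1 := by
  have hD : AlbertThompsonD p d =
      diagonal (fun i => (-1) ^ d * albertThompsonSign p i) *
        (finRotate d).permMatrix (ZMod p) := by
    ext i j
    simp [AlbertThompsonD_apply hd, diagonal_mul, PEquiv.toMatrix_apply, finRotate_apply, eq_comm]
  rw [hD, det_mul, det_diagonal, det_permutation, sign_finRotate, Finset.prod_mul_distrib,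
    prod_albertThompsonSign, Finset.prod_const, Finset.card_univ, Fintype.card_fin, ← pow_mul]
  push_cast
  rw [← pow_succ, ← pow_add, show d * d + 1 + (d - 1) = d * (d + 1) by rw [Nat.mul_succ]; omega]
  exact (Nat.even_mul_succ_self d).neg_one_pow

lemma single_mul_AlbertThompsonD (hd : 2 ≤ d) (a b : Fin d) (c : ZMod p) :
    single a b c * AlbertThompsonD p d = AlbertThompsonD p d *
      single (a + 1) (b + 1) (albertThompsonSign p a * albertThompsonSign p b * c) := by
  ext i j
  by_cases hi : i = a <;> by_cases hj : j = b + 1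
  · subst hi hj
    rw [single_mul_apply_same, mul_single_apply_same, AlbertThompsonD_apply hd,
      AlbertThompsonD_apply hd, if_pos rfl, if_pos rfl]
    linear_combination
      -(-1) ^ d * albertThompsonSign p b * c * albertThompsonSign_mul_self (p := p) i
  · subst hi
    rw [mul_single_apply_of_ne _ _ _ _ _ hj, single_mul_apply_same, AlbertThompsonD_apply hd,
      if_neg hj, mul_zero]
  · rw [single_mul_apply_of_ne _ _ _ _ _ hi, hj, mul_single_apply_same,
      AlbertThompsonD_apply hd, if_neg (by simpa using Ne.symm hi), zero_mul]
  · rw [single_mul_apply_of_ne _ _ _ _ _ hi, mul_single_apply_of_ne _ _ _ _ _ hj]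

lemma inv_mul_transvection_mul_eq (hd : 2 ≤ d)
    (hD : (D : Matrix (Fin d) (Fin d) (ZMod p)) = AlbertThompsonD p d) {a b : Fin d}
    (hab : a ≠ b) (c : ZMod p) :
    D⁻¹ * transvection hab c * D = transvection ((add_left_injective 1).ne hab)
      (albertThompsonSign p a * albertThompsonSign p b * c) :=
  Subtype.ext <| coe_inv_mul_mul_eq <| by
    rw [transvection_coe, transvection_coe, hD, add_mul, mul_add, one_mul, mul_one,
      single_mul_AlbertThompsonD hd]

lemma Matrix.SpecialLinearGroup.TransvectionsMem.add_one (hd : 2 ≤ d)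
    (hD : (D : Matrix (Fin d) (Fin d) (ZMod p)) = AlbertThompsonD p d) (hDH : D ∈ H)
    {a b : Fin d} (h : TransvectionsMem H a b) : TransvectionsMem H (a + 1) (b + 1) := by
  intro hab c
  have hab' : a ≠ b := fun e => hab (by rw [e])
  have hc : c = albertThompsonSign p a * albertThompsonSign p b *
      (albertThompsonSign p a * albertThompsonSign p b * c) := by
    rw [← mul_assoc, mul_mul_mul_comm, albertThompsonSign_mul_self, albertThompsonSign_mul_self,
      one_mul, one_mul]
  rw [hc, ← inv_mul_transvection_mul_eq hd hD hab']
  exact mul_mem (mul_mem (inv_mem hDH) (h hab' _)) hDH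

lemma Matrix.SpecialLinearGroup.TransvectionsMem.add (hd : 2 ≤ d)
    (hD : (D : Matrix (Fin d) (Fin d) (ZMod p)) = AlbertThompsonD p d) (hDH : D ∈ H)
    {a b : Fin d} (h : TransvectionsMem H a b) (t : Fin d) :
    TransvectionsMem H (a + t) (b + t) := by
  rw [← Fin.cast_val_eq_self t]
  generalize t.val = n
  induction n with
  | zero => simpa using h
  | succ n ih =>
    rw [Nat.cast_succ, ← add_assoc, ← add_assoc]
    exact ih.add_one hd hD hDH

lemma Matrix.SpecialLinearGroup.TransvectionsMem.offset (hd : 2 ≤ d)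
    (hD : (D : Matrix (Fin d) (Fin d) (ZMod p)) = AlbertThompsonD p d) (hDH : D ∈ H)
    {a b : Fin d} (h : TransvectionsMem H a b) (i : Fin d) :
    TransvectionsMem H i (i + (b - a)) := by
  convert h.add hd hD hDH (i - a) using 1 <;> abel

lemma AlbertThompsonC_eq : AlbertThompsonC p d =
    1 + (single ((d - 2 : ℕ) : Fin d) 1 1 + single ((d - 1 : ℕ) : Fin d) 0 1) := by
  rw [AlbertThompsonC, Nat.cast_one, Nat.cast_zero, add_assoc]

lemma det_AlbertThompsonC (hd : 4 ≤ d) : (AlbertThompsonC p d).det = 1 := by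
  obtain ⟨h₁, h₂, h₃⟩ : ((d - 2 : ℕ) : Fin d) ≠ 1 ∧ ((d - 1 : ℕ) : Fin d) ≠ 0 ∧
      (1 : Fin d) ≠ ((d - 1 : ℕ) : Fin d) := by
    refine ⟨?_, ?_, ?_⟩ <;>
      simp (disch := omega) [Fin.ext_iff, Fin.val_natCast, Nat.mod_eq_of_lt] <;> omega
  have hC : AlbertThompsonC p d = Matrix.transvection ((d - 2 : ℕ) : Fin d) 1 1 *
      Matrix.transvection ((d - 1 : ℕ) : Fin d) 0 1 := by
    rw [AlbertThompsonC_eq, Matrix.transvection, Matrix.transvection, add_mul, mul_add, mul_add,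
      one_mul, mul_one, one_mul, single_mul_single_of_ne _ _ _ _ h₃, add_zero]
    abel
  rw [hC, det_mul, det_transvection_of_ne _ _ h₁, det_transvection_of_ne _ _ h₂, one_mul]

lemma AlbertThompsonC_mul_AlbertThompsonD (hd : 4 ≤ d) :
    AlbertThompsonC p d * AlbertThompsonD p d = AlbertThompsonD p d *
      (1 + (single ((d - 1 : ℕ) : Fin d) 2 (-1) + single 0 1 1)) := by
  obtain ⟨h₁, h₂, h₃, h₄, h₅⟩ : ((d - 2 : ℕ) : Fin d) + 1 = ((d - 1 : ℕ) : Fin d) ∧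
      ((d - 1 : ℕ) : Fin d) + 1 = 0 ∧ ((d - 2 : ℕ) : Fin d) ≠ 1 ∧ ((d - 1 : ℕ) : Fin d) ≠ 1 ∧
      (0 : Fin d) ≠ 1 := by
    refine ⟨?_, ?_, ?_, ?_, ?_⟩ <;>
      simp (disch := omega) [Fin.ext_iff, Fin.val_add, Fin.val_natCast, Nat.mod_eq_of_lt] <;> omega
  rw [AlbertThompsonC_eq, add_mul, add_mul, one_mul, single_mul_AlbertThompsonD (by omega),
    single_mul_AlbertThompsonD (by omega), mul_add, mul_add, mul_one]
  simp [albertThompsonSign, h₁, h₂, h₃, h₄, h₅, one_add_one_eq_two]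

lemma commutatorElement_AlbertThompsonC_conj (hd : 5 ≤ d)
    (hC : (C : Matrix (Fin d) (Fin d) (ZMod p)) = AlbertThompsonC p d)
    (hD : (D : Matrix (Fin d) (Fin d) (ZMod p)) = AlbertThompsonD p d)
    (hne : ((d - 1 : ℕ) : Fin d) ≠ 1) :
    ⁅C, D⁻¹ * C * D⁆ = transvection hne 1 := by
  obtain ⟨h₁, h₂, h₃, h₄, h₅, h₆, h₇⟩ : (1 : Fin d) ≠ ((d - 2 : ℕ) : Fin d) ∧
      (0 : Fin d) ≠ ((d - 2 : ℕ) : Fin d) ∧ (0 : Fin d) ≠ ((d - 1 : ℕ) : Fin d) ∧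
      (2 : Fin d) ≠ ((d - 2 : ℕ) : Fin d) ∧ (2 : Fin d) ≠ ((d - 1 : ℕ) : Fin d) ∧
      (2 : Fin d) ≠ 0 ∧ (1 : Fin d) ≠ 0 := by
    refine ⟨?_, ?_, ?_, ?_, ?_, ?_, ?_⟩ <;>
      simp (disch := omega) [Fin.ext_iff, Fin.val_natCast, Nat.mod_eq_of_lt] <;> omega
  have hCD : ((D⁻¹ * C * D : SpecialLinearGroup (Fin d) (ZMod p)) : Matrix (Fin d) (Fin d) (ZMod p))
      = 1 + (single ((d - 1 : ℕ) : Fin d) 2 (-1) + single 0 1 1) :=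
    coe_inv_mul_mul_eq (by rw [hC, hD]; exact AlbertThompsonC_mul_AlbertThompsonD (by omega))
  refine Subtype.ext ((coe_commutatorElement_of_mul_eq_zero (hC.trans AlbertThompsonC_eq) hCD
    ?_ ?_ ?_).trans ?_) <;>
    simp [add_mul, mul_add, single_mul_single_same, single_mul_single_of_ne, transvection_coe,
      h₁, h₂, h₃, h₄, h₅, h₆, h₇, hne.symm]

lemma commutatorElement_transvection_AlbertThompsonC (hd : 5 ≤ d)
    (hC : (C : Matrix (Fin d) (Fin d) (ZMod p)) = AlbertThompsonC p d)
    (hne₁ : ((d - 3 : ℕ) : Fin d) ≠ ((d - 1 : ℕ) : Fin d)) (hne₂ : ((d - 3 : ℕ) : Fin d) ≠ 0)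
    (c : ZMod p) :
    ⁅transvection hne₁ c, C⁆ = transvection hne₂ c := by
  obtain ⟨h₁, h₂, h₃, h₄, h₅, h₆⟩ : (1 : Fin d) ≠ ((d - 2 : ℕ) : Fin d) ∧
      (0 : Fin d) ≠ ((d - 2 : ℕ) : Fin d) ∧ (0 : Fin d) ≠ ((d - 1 : ℕ) : Fin d) ∧
      (1 : Fin d) ≠ ((d - 1 : ℕ) : Fin d) ∧ (1 : Fin d) ≠ ((d - 3 : ℕ) : Fin d) ∧
      ((d - 1 : ℕ) : Fin d) ≠ ((d - 2 : ℕ) : Fin d) := by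
    refine ⟨?_, ?_, ?_, ?_, ?_, ?_⟩ <;>
      simp (disch := omega) [Fin.ext_iff, Fin.val_natCast, Nat.mod_eq_of_lt] <;> omega
  refine Subtype.ext ((coe_commutatorElement_of_mul_eq_zero (transvection_coe hne₁ c)
    (hC.trans AlbertThompsonC_eq) ?_ ?_ ?_).trans ?_) <;>
    simp [add_mul, mul_add, single_mul_single_same, single_mul_single_of_ne, transvection_coe,
      h₁, h₂, h₃, h₄, h₅, h₆, hne₁.symm, hne₂.symm]

lemma forall_transvectionsMem_of_AlbertThompson (hd : 5 ≤ d)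
    (hC : (C : Matrix (Fin d) (Fin d) (ZMod p)) = AlbertThompsonC p d)
    (hD : (D : Matrix (Fin d) (Fin d) (ZMod p)) = AlbertThompsonD p d) (hCH : C ∈ H) (hDH : D ∈ H)
    (i j : Fin d) : TransvectionsMem H i j := by
  obtain ⟨h₁, h₂, h₃, h₄, h₅, h₆⟩ : ((d - 1 : ℕ) : Fin d) ≠ 1 ∧ 1 - ((d - 1 : ℕ) : Fin d) = 2 ∧
      ((d - 3 : ℕ) : Fin d) ≠ ((d - 1 : ℕ) : Fin d) ∧ ((d - 3 : ℕ) : Fin d) ≠ 0 ∧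
      ((d - 3 : ℕ) : Fin d) + 2 = ((d - 1 : ℕ) : Fin d) ∧
      (0 : Fin d) = 3 + ((d - 3 : ℕ) : Fin d) := by
    refine ⟨?_, ?_, ?_, ?_, ?_, ?_⟩ <;>
      simp (disch := omega) [Fin.ext_iff, Fin.val_add, Fin.val_sub, Fin.val_natCast,
        Nat.mod_eq_of_lt] <;> omega
  have hoff₂ : ∀ i, TransvectionsMem H i (i + 2) := by
    have h := transvectionsMem_of_one_mem h₁ (commutatorElement_AlbertThompsonC_conj hd hC hD h₁ ▸
      Subgroup.commutatorElement_mem hCH (mul_mem (mul_mem (inv_mem hDH) hCH) hDH))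
    simpa [h₂] using h.offset (by omega) hD hDH
  have hoff₃ : ∀ i, TransvectionsMem H i (i + 3) := by
    have hlast := hoff₂ ((d - 3 : ℕ) : Fin d)
    rw [h₅] at hlast
    have h : TransvectionsMem H ((d - 3 : ℕ) : Fin d) 0 := fun _ c =>
      commutatorElement_transvection_AlbertThompsonC hd hC h₃ h₄ c ▸
        Subgroup.commutatorElement_mem (hlast h₃ c) hCH
    simpa [← sub_eq_iff_eq_add.2 h₆] using h.offset (by omega) hD hDH
  have hoff := Fin.forall_ne_zero_of_two_of_three (P := fun r => ∀ i, TransvectionsMem H i (i + r))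
    (by omega) hoff₂ hoff₃
    fun r s hr hs hr' hs' i => by
      simpa [add_assoc] using (hr' i).trans (by simpa using hr) (by simpa using hs) (hs' (i + r))
  by_cases hij : i = j
  · exact fun h => absurd hij h
  · simpa using hoff (j - i) (sub_ne_zero.2 (Ne.symm hij)) i

end AlbertThompson

theorem albert_thompson_generate_SL (p d : ℕ) [Fact p.Prime] [NeZero d] (hd : 5 ≤ d) :
    ∃ C' D' : Matrix.SpecialLinearGroup (Fin d) (ZMod p),
      (C' : Matrix (Fin d) (Fin d) (ZMod p)) = AlbertThompsonC p d ∧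
      (D' : Matrix (Fin d) (Fin d) (ZMod p)) = AlbertThompsonD p d ∧
      Subgroup.closure ({C', D'} : Set (Matrix.SpecialLinearGroup (Fin d) (ZMod p))) = ⊤ := by
  have : Nontrivial (Fin d) := Fin.nontrivial_iff_two_le.2 (by omega)
  refine ⟨⟨AlbertThompsonC p d, det_AlbertThompsonC (by omega)⟩,
    ⟨AlbertThompsonD p d, det_AlbertThompsonD (by omega)⟩, rfl, rfl, ?_⟩
  exact SpecialLinearGroup.eq_top_of_forall_transvectionsMem
    (forall_transvectionsMem_of_AlbertThompson hd rfl rfl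
      (Subgroup.subset_closure (Set.mem_insert _ _))
      (Subgroup.subset_closure (Set.mem_insert_of_mem _ rfl)))
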